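/- arXiv:2211.08391 — 2 statements merged into one kernel-verified Lean document; each statement's English description precedes it below -/
import Mathlib

section
/- Let A be a commutative Noetherian ring and let I, J be integrally closed ideals of A, each containing a nonzerodivisor. If \overline{I^n} = \overline{J^n} for some natural number n >= 1, then I = J. That is, the monoid ic(A) of integrally closed ideals containing nonzerodivisors under I*J = \overline{IJ} is torsion-free. -/
/-- `x` satisfies an equation of integral dependence over the ideal `I`:
`x ^ n + a 1 * x ^ (n-1) + ⋯ + a (n-1) * x + a n = 0` with `a i ∈ I ^ i`. -/
def IsIntegralOverIdeal {A : Type*} [CommRing A] (I : Ideal A) (x : A) : Prop :=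
  ∃ n : ℕ, 0 < n ∧ ∃ a : ℕ → A, (∀ i, 1 ≤ i → i ≤ n → a i ∈ I ^ i) ∧
    x ^ n + ∑ i ∈ Finset.Icc 1 n, a i * x ^ (n - i) = 0

/-- The integral closure `\overline{I}` of an ideal `I`.  The set of elements integral
over `I` is in fact an ideal, so taking the ideal span of this set does not change it. -/
def intCl {A : Type*} [CommRing A] (I : Ideal A) : Ideal A :=
  Ideal.span {x | IsIntegralOverIdeal I x}

/-!
An element `x` is integral over `I` exactly when `x t` is integral over the Rees algebra
`A[I t] ⊆ A[t]`; in particular the integral elements form an ideal. The substitution `t ↦ t ^ n`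
maps `A[I ^ n t]` into `A[I t]` and `x ^ n t` to `(x t) ^ n`, so `x ^ n` integral over `I ^ n`
forces `x` integral over `I`. Hence if `x ∈ I` and `\overline{I ^ n} = \overline{J ^ n}`, then
`x ^ n` is integral over `J ^ n`, so `x ∈ \overline{J} = J`.
-/

open Polynomial

lemma Finset.sum_Icc_one_eq_sum_range_sub {M : Type*} [AddCommMonoid M] (f : ℕ → M) (n : ℕ) :
    ∑ i ∈ Icc 1 n, f i = ∑ j ∈ range n, f (n - j) := by
  rw [← Nat.Ico_zero_eq_range, sum_Ico_reflect f 0 n.le_succ, Nat.add_sub_cancel_left,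
    Nat.sub_zero, Ico_add_one_right_eq_Icc]

section

variable {A : Type*} [CommRing A]

/-- For `j ≥ n` the condition `b j ∈ I ^ (n - j)` is void, since `n - j = 0`. -/
lemma isIntegralOverIdeal_iff_exists_range (I : Ideal A) (x : A) :
    IsIntegralOverIdeal I x ↔ ∃ n : ℕ, ∃ b : ℕ → A, (∀ j, b j ∈ I ^ (n - j)) ∧
      x ^ n + ∑ j ∈ Finset.range n, b j * x ^ j = 0 := by
  have sum_eq (n : ℕ) (a : ℕ → A) : ∑ i ∈ Finset.Icc 1 n, a i * x ^ (n - i) =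
      ∑ j ∈ Finset.range n, a (n - j) * x ^ j := by
    rw [Finset.sum_Icc_one_eq_sum_range_sub]
    refine Finset.sum_congr rfl fun j hj => ?_
    rw [Nat.sub_sub_self (Finset.mem_range.1 hj).le]
  constructor
  · rintro ⟨n, -, a, ha, heq⟩
    refine ⟨n, fun j => a (n - j), fun j => ?_, by rwa [← sum_eq]⟩
    rcases lt_or_ge j n with hj | hj
    · exact ha _ (by omega) (by omega)
    · simp [Nat.sub_eq_zero_of_le hj]
  · rintro ⟨n, b, hb, heq⟩
    rcases Nat.eq_zero_or_pos n with rfl | hn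
    · have : Subsingleton A := subsingleton_of_zero_eq_one (by simpa using heq.symm)
      exact ⟨1, one_pos, 0, fun _ _ _ => zero_mem _, Subsingleton.elim _ _⟩
    refine ⟨n, hn, fun i => b (n - i), fun i hi1 hin => ?_, ?_⟩
    · simpa [Nat.sub_sub_self hin] using hb (n - i)
    · rw [sum_eq]
      convert heq using 3 with j hj
      rw [Nat.sub_sub_self (Finset.mem_range.1 hj).le]

lemma isIntegral_of_pow_add_sum_eq_zero {R B : Type*} [CommRing R] [Ring B] [Algebra R B]
    {y : B} {n : ℕ} (c : ℕ → R)
    (h : y ^ n + ∑ j ∈ Finset.range n, algebraMap R B (c j) * y ^ j = 0) : IsIntegral R y := by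
  refine ⟨X ^ n + ∑ j : Fin n, C (c j) * X ^ (j : ℕ), monic_X_pow_add (degree_sum_fin_lt _), ?_⟩
  rw [Fin.sum_univ_eq_sum_range (fun j => C (c j) * X ^ j)]
  simpa [eval₂_finsetSum] using h

lemma isIntegralOverIdeal_iff_isIntegral_monomial (I : Ideal A) (x : A) :
    IsIntegralOverIdeal I x ↔ IsIntegral (reesAlgebra I) (monomial 1 x) := by
  rw [isIntegralOverIdeal_iff_exists_range]
  constructor
  · rintro ⟨n, b, hb, heq⟩
    refine isIntegral_of_pow_add_sum_eq_zero (n := n)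
      (fun j => ⟨monomial (n - j) (b j), reesAlgebra.monomial_mem.2 (hb j)⟩) ?_
    have hterm : ∀ j ∈ Finset.range n,
        monomial (n - j) (b j) * monomial j (x ^ j) = monomial n (b j * x ^ j) := fun j hj => by
      rw [monomial_mul_monomial, Nat.sub_add_cancel (Finset.mem_range.1 hj).le]
    simp only [Subalgebra.algebraMap_mk, Algebra.algebraMap_self, RingHom.id_apply, monomial_pow,
      one_mul]
    rw [Finset.sum_congr rfl hterm, ← map_sum, ← map_add, heq, map_zero]
  · rintro ⟨p, hp, heval⟩
    rw [hp.as_sum] at heval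
    simp only [eval₂_add, eval₂_X_pow, eval₂_finsetSum, eval₂_mul, eval₂_C, monomial_pow,
      one_mul] at heval
    set n := p.natDegree
    refine ⟨n, fun j => (p.coeff j : A[X]).coeff (n - j),
      fun j => (mem_reesAlgebra_iff I _).1 (p.coeff j).2 _, ?_⟩
    have hcoeff : ∀ j ∈ Finset.range n, ((p.coeff j : A[X]) * monomial j (x ^ j)).coeff n =
        (p.coeff j : A[X]).coeff (n - j) * x ^ j := fun j hj => by
      conv_lhs => rw [← Nat.sub_add_cancel (Finset.mem_range.1 hj).le]
      exact coeff_mul_monomial _ _ _ _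
    have heval_n := congrArg (coeff · n) heval
    simp only [coeff_add, coeff_monomial_same, finsetSum_coeff, coeff_zero] at heval_n
    rw [← Finset.sum_congr rfl hcoeff]
    exact heval_n

/-- `x ↦ x t` pulls the integral closure of the Rees algebra `A[I t]` in `A[t]` back to an ideal. -/
noncomputable def integralClosureIdeal (I : Ideal A) : Ideal A :=
  ((integralClosure (reesAlgebra I) A[X]).toSubmodule.restrictScalars A).comap (monomial 1)

lemma intCl_eq_integralClosureIdeal (I : Ideal A) : intCl I = integralClosureIdeal I := by
  have : {x | IsIntegralOverIdeal I x} = (integralClosureIdeal I : Set A) :=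
    Set.ext fun x => isIntegralOverIdeal_iff_isIntegral_monomial I x
  rw [intCl, this, Ideal.span_eq]

lemma mem_intCl_iff {I : Ideal A} {x : A} : x ∈ intCl I ↔ IsIntegralOverIdeal I x := by
  rw [intCl_eq_integralClosureIdeal]
  exact (isIntegralOverIdeal_iff_isIntegral_monomial I x).symm

lemma le_intCl (I : Ideal A) : I ≤ intCl I := fun x hx => by
  rw [mem_intCl_iff, isIntegralOverIdeal_iff_isIntegral_monomial]
  exact isIntegral_algebraMap
    (x := (⟨monomial 1 x, reesAlgebra.monomial_mem.2 (by rwa [pow_one])⟩ : reesAlgebra I))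

lemma expand_mem_reesAlgebra {J : Ideal A} {n : ℕ} (hn : 0 < n) {p : A[X]}
    (hp : p ∈ reesAlgebra (J ^ n)) : expand A n p ∈ reesAlgebra J := by
  rw [mem_reesAlgebra_iff] at hp ⊢
  intro i
  rw [coeff_expand hn]
  split_ifs with h
  · obtain ⟨k, rfl⟩ := h
    rw [Nat.mul_div_cancel_left k hn, pow_mul]
    exact hp k
  · exact zero_mem _

lemma IsIntegralOverIdeal.of_pow {J : Ideal A} {x : A} {n : ℕ} (hn : 0 < n)
    (h : IsIntegralOverIdeal (J ^ n) (x ^ n)) : IsIntegralOverIdeal J x := by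
  rw [isIntegralOverIdeal_iff_isIntegral_monomial] at h ⊢
  refine IsIntegral.of_pow hn ?_
  let expandRees : reesAlgebra (J ^ n) →ₐ[A] reesAlgebra J :=
    ((expand A n).comp (reesAlgebra (J ^ n)).val).codRestrict (reesAlgebra J)
      fun p => expand_mem_reesAlgebra hn p.2
  simpa [monomial_pow, expand_monomial] using
    h.map_of_comp_eq expandRees.toRingHom (expand A n).toRingHom rfl

lemma le_of_intCl_pow_eq {I J : Ideal A} (hJ : intCl J = J) {n : ℕ} (hn : 0 < n)
    (h : intCl (I ^ n) = intCl (J ^ n)) : I ≤ J := fun x hx => by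
  have hxn : x ^ n ∈ intCl (J ^ n) := h ▸ le_intCl _ (Ideal.pow_mem_pow hx n)
  rw [← hJ, mem_intCl_iff]
  exact (mem_intCl_iff.1 hxn).of_pow hn

end

theorem star_torsionFree_general {A : Type*} [CommRing A] (I J : Ideal A)
    (hIc : intCl I = I) (hJc : intCl J = J)
    (n : ℕ) (hn : 1 ≤ n) (h : intCl (I ^ n) = intCl (J ^ n)) : I = J :=
  le_antisymm (le_of_intCl_pow_eq hJc hn h) (le_of_intCl_pow_eq hIc hn h.symm)

/-- Torsion-freeness: if `I, J` are integrally closed, contain nonzerodivisors, and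
`intCl (I^n) = intCl (J^n)` for some `n ≥ 1`, then `I = J`. -/
theorem star_torsionFree {A : Type*} [CommRing A] [IsNoetherianRing A] (I J : Ideal A)
    (hIc : intCl I = I) (hJc : intCl J = J)
    (hInzd : ∃ r ∈ I, r ∈ nonZeroDivisors A) (hJnzd : ∃ r ∈ J, r ∈ nonZeroDivisors A)
    (n : ℕ) (hn : 1 ≤ n) (h : intCl (I ^ n) = intCl (J ^ n)) : I = J :=
  star_torsionFree_general I J hIc hJc n hn h
end

section
/- Let A be a commutative Noetherian ring and let B be a faithfully flat A-algebra. For ideals I of A write IB for the extension of I to B. Then for all integrally closed ideals I, J of A containing nonzerodivisors: (a) \overline{(IJ)B} = \overline{\overline{IB}\cdot\overline{JB}}, so that I maps to \overline{IB} is a monoid homomorphism ic(A) -> ic(B); and (b) if \overline{IB} = \overline{JB} then I = J, so this homomorphism is injective. -/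
/-!
For an ideal `K` containing a nonzerodivisor, `x ∈ \overline{K}` iff `x M ⊆ K M` for some
finitely generated ideal `M` containing a nonzerodivisor: Cayley–Hamilton turns such an `M` into
an equation of integral dependence, and conversely an equation of degree `n` over a finitely
generated `K` gives `M = (K + (x)) ^ (n - 1)`. This criterion is visibly multiplicative and
transitive, so `\overline{\overline{K} \, \overline{K'}} = \overline{K K'}` in any ring, which
is (a) in `B`.

For (b), an equation of `x` over `JB` yields `x ^ n ∈ (J (J + (x)) ^ (n - 1)) B`. Since `B` is
faithfully flat, extended ideals contract back, so `x ^ n ∈ J (J + (x)) ^ (n - 1)` in `A`, and as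
`A` is Noetherian the criterion makes `x` integral over `J`. Hence
`\overline{IB} ⊆ \overline{JB}` forces `I ⊆ \overline{J} = J`.
-/

open Polynomial

section Basic

variable {B : Type*} [CommRing B]

theorem isIntegralOverIdeal_of_mem {K : Ideal B} {x : B} (hx : x ∈ K) :
    IsIntegralOverIdeal K x := by
  refine ⟨1, one_pos, fun _ => -x, fun i h1 h2 => ?_, by simp⟩
  obtain rfl : i = 1 := by omega
  simpa using K.neg_mem hx

theorem IsIntegralOverIdeal.mono {K L : Ideal B} (hKL : K ≤ L) {x : B}
    (hx : IsIntegralOverIdeal K x) : IsIntegralOverIdeal L x := by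
  obtain ⟨n, hn, a, ha, heq⟩ := hx
  exact ⟨n, hn, a, fun i h1 h2 => Ideal.pow_right_mono hKL i (ha i h1 h2), heq⟩

theorem le_intCl_s10 (K : Ideal B) : K ≤ intCl K :=
  fun _ hx => Ideal.subset_span (isIntegralOverIdeal_of_mem hx)

theorem intCl_mono {K L : Ideal B} (hKL : K ≤ L) : intCl K ≤ intCl L :=
  Ideal.span_mono fun _ hx => IsIntegralOverIdeal.mono hKL hx

theorem isIntegralOverIdeal_of_monic_of_natDegree_pos {K : Ideal B} {x : B} {p : B[X]}
    (hp : p.Monic) (hdeg : 0 < p.natDegree) (hpx : p.eval x = 0)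
    (hcoeff : ∀ i, p.coeff i ∈ K ^ (p.natDegree - i)) : IsIntegralOverIdeal K x := by
  set n := p.natDegree
  refine ⟨n, hdeg, fun i => p.coeff (n - i),
    fun i _ hi => by simpa [Nat.sub_sub_self hi] using hcoeff (n - i), ?_⟩
  have hreflect : ∑ i ∈ Finset.Icc 1 n, p.coeff (n - i) * x ^ (n - i) =
      ∑ j ∈ Finset.range n, p.coeff j * x ^ j := by
    rw [← Finset.Ico_add_one_right_eq_Icc,
      Finset.sum_Ico_reflect (fun j => p.coeff j * x ^ j) 1 le_rfl]
    simp
  rw [hreflect, ← hpx, eval_eq_sum_range, Finset.sum_range_succ, hp.coeff_natDegree, one_mul,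
    add_comm]

theorem isIntegralOverIdeal_of_monic {K : Ideal B} {x : B} {p : B[X]}
    (hp : p.Monic) (hpx : p.eval x = 0)
    (hcoeff : ∀ i, p.coeff i ∈ K ^ (p.natDegree - i)) : IsIntegralOverIdeal K x := by
  rcases Nat.eq_zero_or_pos p.natDegree with hdeg | hdeg
  · -- a monic polynomial of degree zero is `1`, so `B` is the zero ring
    have : Subsingleton B := subsingleton_of_zero_eq_one <| by
      rwa [hp.natDegree_eq_zero.mp hdeg, eval_one, eq_comm] at hpx
    exact isIntegralOverIdeal_of_mem (Subsingleton.elim 0 x ▸ K.zero_mem)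
  · exact isIntegralOverIdeal_of_monic_of_natDegree_pos hp hdeg hpx hcoeff

end Basic

namespace Ideal

variable {B : Type*} [CommRing B]

theorem exists_mem_mul_nonZeroDivisors {K K' : Ideal B} (hK : ∃ r ∈ K, r ∈ nonZeroDivisors B)
    (hK' : ∃ r ∈ K', r ∈ nonZeroDivisors B) : ∃ r ∈ K * K', r ∈ nonZeroDivisors B :=
  let ⟨r, hrK, hr⟩ := hK
  let ⟨r', hrK', hr'⟩ := hK'
  ⟨r * r', mul_mem_mul hrK hrK', mul_mem hr hr'⟩

/-- `L` is integral over `K` in the module-theoretic sense: `L M ≤ K M` for some finitely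
generated ideal `M` containing a nonzerodivisor. -/
def IsIntegralOn (K L : Ideal B) : Prop :=
  ∃ M : Ideal B, M.FG ∧ (∃ r ∈ M, r ∈ nonZeroDivisors B) ∧ L * M ≤ K * M

theorem isIntegralOn_of_le {K L : Ideal B} (h : L ≤ K) : IsIntegralOn K L :=
  ⟨⊤, ⟨{1}, by simp⟩, ⟨1, Submodule.mem_top, one_mem _⟩, mul_mono_left h⟩

namespace IsIntegralOn

variable {K K' L L' : Ideal B}

theorem mono_right (h : IsIntegralOn K L) (hL : L' ≤ L) : IsIntegralOn K L' := by
  obtain ⟨M, hM, hr, hle⟩ := h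
  exact ⟨M, hM, hr, (mul_mono_left hL).trans hle⟩

theorem mul (h : IsIntegralOn K L) (h' : IsIntegralOn K' L') :
    IsIntegralOn (K * K') (L * L') := by
  obtain ⟨M, hM, hr, hle⟩ := h
  obtain ⟨M', hM', hr', hle'⟩ := h'
  refine ⟨M * M', hM.mul hM', exists_mem_mul_nonZeroDivisors hr hr', ?_⟩
  calc L * L' * (M * M') = (L * M) * (L' * M') := by ring
    _ ≤ (K * M) * (K' * M') := mul_mono hle hle'
    _ = K * K' * (M * M') := by ring

theorem sup (h : IsIntegralOn K L) (h' : IsIntegralOn K L') : IsIntegralOn K (L ⊔ L') := by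
  obtain ⟨M, hM, hr, hle⟩ := h
  obtain ⟨M', hM', hr', hle'⟩ := h'
  refine ⟨M * M', hM.mul hM', exists_mem_mul_nonZeroDivisors hr hr', ?_⟩
  rw [sup_mul]
  refine sup_le ?_ ?_
  · calc L * (M * M') = L * M * M' := (mul_assoc _ _ _).symm
      _ ≤ K * M * M' := mul_mono_left hle
      _ = K * (M * M') := mul_assoc _ _ _
  · calc L' * (M * M') = L' * M' * M := by ring
      _ ≤ K * M' * M := mul_mono_left hle'
      _ = K * (M * M') := by ring

theorem trans (h : IsIntegralOn K L) (h' : IsIntegralOn L L') : IsIntegralOn K L' := by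
  obtain ⟨M, hM, hr, hle⟩ := h
  obtain ⟨M', hM', hr', hle'⟩ := h'
  refine ⟨M * M', hM.mul hM', exists_mem_mul_nonZeroDivisors hr hr', ?_⟩
  calc L' * (M * M') = L' * M' * M := by ring
    _ ≤ L * M' * M := mul_mono_left hle'
    _ = L * M * M' := by ring
    _ ≤ K * M * M' := mul_mono_left hle
    _ = K * (M * M') := mul_assoc _ _ _

end IsIntegralOn

theorem isIntegralOn_of_fg {K L : Ideal B} (hL : L.FG)
    (h : ∀ y ∈ L, IsIntegralOn K (span {y})) : IsIntegralOn K L := by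
  classical
  obtain ⟨S, rfl⟩ := hL
  induction S using Finset.induction_on with
  | empty => exact isIntegralOn_of_le (by simp only [Finset.coe_empty, span_empty, bot_le])
  | insert y S _ ih =>
    rw [Finset.coe_insert, span_insert] at h ⊢
    exact (h y (Submodule.mem_sup_left (mem_span_singleton_self y))).sup
      (ih fun z hz => h z (Submodule.mem_sup_right hz))

/-- Cayley–Hamilton applied to multiplication by `x` on the witness ideal. -/
theorem IsIntegralOn.exists_monic {K : Ideal B} {x : B} (h : IsIntegralOn K (span {x})) :
    ∃ p : B[X], p.Monic ∧ p.eval x = 0 ∧ ∀ i, p.coeff i ∈ K ^ (p.natDegree - i) := by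
  obtain ⟨M, hM, ⟨r, hrM, hr⟩, hle⟩ := h
  have : Module.Finite B M := Module.Finite.iff_fg.mpr hM
  have hrange : LinearMap.range (algebraMap B (Module.End B M) x) ≤ K • ⊤ := by
    rintro _ ⟨m, rfl⟩
    rw [Submodule.mem_smul_top_iff, smul_eq_mul]
    exact hle (mul_mem_mul (mem_span_singleton_self x) m.2)
  obtain ⟨p, hp, -, hcoeff, hpx⟩ :=
    LinearMap.exists_monic_and_natDegree_eq_and_coeff_mem_pow_and_aeval_eq_zero _ _ K hrange
  refine ⟨p, hp, ?_, hcoeff⟩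
  rw [aeval_algebraMap_apply, coe_aeval_eq_eval] at hpx
  have hr0 : p.eval x * r = 0 := congrArg Subtype.val (LinearMap.congr_fun hpx ⟨r, hrM⟩)
  exact mem_nonZeroDivisors_iff_right.mp hr _ hr0

theorem IsIntegralOn.isIntegralOverIdeal {K : Ideal B} {x : B} (h : IsIntegralOn K (span {x})) :
    IsIntegralOverIdeal K x :=
  let ⟨_, hp, hpx, hcoeff⟩ := h.exists_monic
  isIntegralOverIdeal_of_monic hp hpx hcoeff

theorem sup_pow_succ_le (I J : Ideal B) (m : ℕ) :
    (I ⊔ J) ^ (m + 1) ≤ I * (I ⊔ J) ^ m ⊔ J ^ (m + 1) := by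
  induction m with
  | zero => simp
  | succ m ih =>
    calc (I ⊔ J) ^ (m + 2) = I * (I ⊔ J) ^ (m + 1) ⊔ J * (I ⊔ J) ^ (m + 1) := by
          rw [pow_succ' _ (m + 1), sup_mul]
      _ ≤ I * (I ⊔ J) ^ (m + 1) ⊔ J * (I * (I ⊔ J) ^ m ⊔ J ^ (m + 1)) :=
          sup_le_sup_left (mul_mono_right ih) _
      _ = I * (I ⊔ J) ^ (m + 1) ⊔ (I * (J * (I ⊔ J) ^ m) ⊔ J ^ (m + 2)) := by
          rw [mul_sup, pow_succ' J (m + 1), mul_left_comm]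
      _ ≤ I * (I ⊔ J) ^ (m + 1) ⊔ J ^ (m + 2) := by
          have h : I * (J * (I ⊔ J) ^ m) ≤ I * (I ⊔ J) ^ (m + 1) := by
            rw [pow_succ']
            exact mul_mono_right (mul_mono_left le_sup_right)
          exact sup_le le_sup_left (sup_le (h.trans le_sup_left) le_sup_right)

/-- The witness is `T ^ (n - 1)` for `T = I + (x)`: `x T ^ (n - 1) ≤ T ^ n ≤ I T ^ (n - 1)`. -/
theorem isIntegralOn_span_singleton_of_pow_mem {I : Ideal B} {x : B} {n : ℕ} (hn : 0 < n)
    (hT : (I ⊔ span {x}).FG) (hI : ∃ r ∈ I, r ∈ nonZeroDivisors B)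
    (hx : x ^ n ∈ I * (I ⊔ span {x}) ^ (n - 1)) : IsIntegralOn I (span {x}) := by
  obtain ⟨r, hrI, hr⟩ := hI
  set T := I ⊔ span {x}
  refine ⟨T ^ (n - 1), hT.pow,
    ⟨r ^ (n - 1), pow_mem_pow (mem_sup_left hrI) _, pow_mem hr _⟩, ?_⟩
  have hxn : span {x} ^ n ≤ I * T ^ (n - 1) := by
    rwa [span_singleton_pow, span_le, Set.singleton_subset_iff]
  calc span {x} * T ^ (n - 1) ≤ T * T ^ (n - 1) := mul_mono_left le_sup_right
    _ = T ^ (n - 1 + 1) := (pow_succ' _ _).symm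
    _ ≤ I * T ^ (n - 1) ⊔ span {x} ^ (n - 1 + 1) := sup_pow_succ_le _ _ _
    _ ≤ I * T ^ (n - 1) := sup_le le_rfl (Nat.sub_add_cancel hn ▸ hxn)

theorem exists_fg_le_mem_pow {I : Ideal B} {z : B} {i : ℕ} (hz : z ∈ I ^ i) :
    ∃ I' ≤ I, I'.FG ∧ z ∈ I' ^ i := by
  induction i generalizing z with
  | zero => exact ⟨⊥, bot_le, Submodule.fg_bot, by rwa [pow_zero] at hz ⊢⟩
  | succ i ih =>
    rw [pow_succ] at hz
    refine Submodule.mul_induction_on hz (fun m hm y hy => ?_) (fun u v hu hv => ?_)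
    · obtain ⟨I', hI'I, hI', hm'⟩ := ih hm
      refine ⟨I' ⊔ span {y}, sup_le hI'I (span_le.mpr (by simpa using hy)),
        Submodule.FG.sup hI' (Submodule.fg_span_singleton y), ?_⟩
      rw [pow_succ]
      exact mul_mem_mul (pow_right_mono le_sup_left i hm')
        (mem_sup_right (mem_span_singleton_self y))
    · obtain ⟨I₁, hI₁I, hI₁, hu'⟩ := hu
      obtain ⟨I₂, hI₂I, hI₂, hv'⟩ := hv
      exact ⟨I₁ ⊔ I₂, sup_le hI₁I hI₂I, Submodule.FG.sup hI₁ hI₂,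
        add_mem (pow_right_mono le_sup_left _ hu') (pow_right_mono le_sup_right _ hv')⟩

end Ideal

open Ideal

namespace IsIntegralOverIdeal

variable {B : Type*} [CommRing B]

theorem pow_mem_mul_sup_pow {I : Ideal B} {x : B} (hx : IsIntegralOverIdeal I x) :
    ∃ n, 0 < n ∧ x ^ n ∈ I * (I ⊔ span {x}) ^ (n - 1) := by
  obtain ⟨n, hn, a, ha, heq⟩ := hx
  refine ⟨n, hn, ?_⟩
  rw [eq_neg_of_add_eq_zero_left heq]
  refine neg_mem (sum_mem fun i hi => ?_)
  obtain ⟨hi1, hin⟩ := Finset.mem_Icc.mp hi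
  have hmem : a i * x ^ (n - i) ∈ I * I ^ (i - 1) * span {x} ^ (n - i) := by
    rw [← pow_succ', Nat.sub_add_cancel hi1, span_singleton_pow]
    exact mul_mem_mul (ha i hi1 hin) (mem_span_singleton_self _)
  refine (?_ : I * I ^ (i - 1) * span {x} ^ (n - i) ≤ _) hmem
  calc I * I ^ (i - 1) * span {x} ^ (n - i)
      ≤ I * (I ⊔ span {x}) ^ (i - 1) * (I ⊔ span {x}) ^ (n - i) :=
        mul_mono (mul_mono_right (pow_right_mono le_sup_left _)) (pow_right_mono le_sup_right _)
    _ = I * (I ⊔ span {x}) ^ (n - 1) := by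
        rw [mul_assoc, ← pow_add]; congr 3; omega

theorem exists_fg_le {I : Ideal B} {x : B} (hx : IsIntegralOverIdeal I x) :
    ∃ I' ≤ I, I'.FG ∧ IsIntegralOverIdeal I' x := by
  classical
  obtain ⟨n, hn, a, ha, heq⟩ := hx
  have hfg : ∀ i ∈ Finset.Icc 1 n, ∃ I' ≤ I, I'.FG ∧ a i ∈ I' ^ i := fun i hi =>
    exists_fg_le_mem_pow (ha i (Finset.mem_Icc.mp hi).1 (Finset.mem_Icc.mp hi).2)
  choose! F hFI hF haF using hfg
  refine ⟨(Finset.Icc 1 n).sup F, Finset.sup_le hFI, ?_, n, hn, a, fun i h1 h2 => ?_, heq⟩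
  · exact Submodule.fg_finset_sup _ _ hF
  · have hi : i ∈ Finset.Icc 1 n := Finset.mem_Icc.mpr ⟨h1, h2⟩
    exact pow_right_mono (Finset.le_sup hi) i (haF i hi)

/-- Shrinking `L` to a finitely generated ideal that still carries the equation of `x` and a
nonzerodivisor reduces this to `IsIntegralOn.trans`. -/
theorem isIntegralOn_of_forall {K L : Ideal B} {x : B} (hx : IsIntegralOverIdeal L x)
    (hL : ∃ r ∈ L, r ∈ nonZeroDivisors B) (hLK : ∀ y ∈ L, IsIntegralOn K (span {y})) :
    IsIntegralOn K (span {x}) := by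
  obtain ⟨r, hrL, hr⟩ := hL
  obtain ⟨I', hI'L, hI', hxI'⟩ := hx.exists_fg_le
  set I'' := I' ⊔ span {r}
  have hI''L : I'' ≤ L := sup_le hI'L (span_le.mpr (by simpa using hrL))
  obtain ⟨n, hn, hxn⟩ := (hxI'.mono (le_sup_left : I' ≤ I'')).pow_mem_mul_sup_pow
  have hI'' : I''.FG := Submodule.FG.sup hI' (Submodule.fg_span_singleton r)
  have hT : (I'' ⊔ span {x}).FG := Submodule.FG.sup hI'' (Submodule.fg_span_singleton x)
  exact (isIntegralOn_of_fg hI'' fun y hy => hLK y (hI''L hy)).trans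
    (isIntegralOn_span_singleton_of_pow_mem hn hT
      ⟨r, mem_sup_right (mem_span_singleton_self r), hr⟩ hxn)

end IsIntegralOverIdeal

section IntegralClosure

variable {B : Type*} [CommRing B] {K K' : Ideal B}

theorem mem_intCl_iff_isIntegralOn (hK : ∃ r ∈ K, r ∈ nonZeroDivisors B) {x : B} :
    x ∈ intCl K ↔ IsIntegralOn K (span {x}) := by
  refine ⟨fun hx => ?_, fun hx => subset_span hx.isIntegralOverIdeal⟩
  induction hx using Submodule.span_induction with
  | mem y hy => exact IsIntegralOverIdeal.isIntegralOn_of_forall hy hK fun z hz =>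
      isIntegralOn_of_le (span_le.mpr (by simpa using hz))
  | zero => exact isIntegralOn_of_le (by simp)
  | add y z _ _ hy hz => exact (hy.sup hz).mono_right (span_singleton_le_iff_mem _ |>.mpr
      (add_mem (mem_sup_left (mem_span_singleton_self y))
        (mem_sup_right (mem_span_singleton_self z))))
  | smul c y _ hy => exact hy.mono_right (span_singleton_le_iff_mem _ |>.mpr
      (mul_mem_left _ c (mem_span_singleton_self y)))

theorem mem_intCl_iff_s10 (hK : ∃ r ∈ K, r ∈ nonZeroDivisors B) {x : B} :
    x ∈ intCl K ↔ IsIntegralOverIdeal K x :=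
  ⟨fun hx => ((mem_intCl_iff_isIntegralOn hK).mp hx).isIntegralOverIdeal,
    fun hx => subset_span hx⟩

theorem exists_mem_intCl_nonZeroDivisors (hK : ∃ r ∈ K, r ∈ nonZeroDivisors B) :
    ∃ r ∈ intCl K, r ∈ nonZeroDivisors B :=
  let ⟨r, hrK, hr⟩ := hK
  ⟨r, le_intCl_s10 K hrK, hr⟩

theorem intCl_intCl (hK : ∃ r ∈ K, r ∈ nonZeroDivisors B) : intCl (intCl K) = intCl K := by
  refine le_antisymm (fun x hx => ?_) (le_intCl_s10 _)
  have hK' := exists_mem_intCl_nonZeroDivisors hK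
  exact (mem_intCl_iff_isIntegralOn hK).mpr <|
    ((mem_intCl_iff_s10 hK').mp hx).isIntegralOn_of_forall hK' fun y hy =>
      (mem_intCl_iff_isIntegralOn hK).mp hy

theorem intCl_mul_intCl_le (hK : ∃ r ∈ K, r ∈ nonZeroDivisors B)
    (hK' : ∃ r ∈ K', r ∈ nonZeroDivisors B) : intCl K * intCl K' ≤ intCl (K * K') := by
  refine mul_le.mpr fun x hx y hy => ?_
  rw [mem_intCl_iff_isIntegralOn (exists_mem_mul_nonZeroDivisors hK hK'),
    ← span_singleton_mul_span_singleton]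
  exact ((mem_intCl_iff_isIntegralOn hK).mp hx).mul ((mem_intCl_iff_isIntegralOn hK').mp hy)

theorem intCl_intCl_mul_intCl (hK : ∃ r ∈ K, r ∈ nonZeroDivisors B)
    (hK' : ∃ r ∈ K', r ∈ nonZeroDivisors B) :
    intCl (intCl K * intCl K') = intCl (K * K') := by
  refine le_antisymm ?_ (intCl_mono (mul_mono (le_intCl_s10 K) (le_intCl_s10 K')))
  calc intCl (intCl K * intCl K') ≤ intCl (intCl (K * K')) :=
        intCl_mono (intCl_mul_intCl_le hK hK')
    _ = intCl (K * K') := intCl_intCl (exists_mem_mul_nonZeroDivisors hK hK')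

end IntegralClosure

section FaithfullyFlat

variable {A B : Type*} [CommRing A] [CommRing B] [Algebra A B]

theorem algebraMap_mem_nonZeroDivisors [Module.Flat A B] {r : A}
    (hr : r ∈ nonZeroDivisors A) : algebraMap A B r ∈ nonZeroDivisors B := by
  rw [← isRegular_iff_mem_nonZeroDivisors, ← isLeftRegular_iff_isRegular] at hr ⊢
  exact hr.isSMulRegular.of_flat.isLeftRegular

theorem exists_mem_map_nonZeroDivisors [Module.Flat A B] {I : Ideal A}
    (hI : ∃ r ∈ I, r ∈ nonZeroDivisors A) :
    ∃ r ∈ I.map (algebraMap A B), r ∈ nonZeroDivisors B :=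
  let ⟨r, hrI, hr⟩ := hI
  ⟨algebraMap A B r, mem_map_of_mem _ hrI, algebraMap_mem_nonZeroDivisors hr⟩

theorem IsIntegralOverIdeal.of_map [IsNoetherianRing A] [Module.FaithfullyFlat A B]
    {J : Ideal A} (hJ : ∃ r ∈ J, r ∈ nonZeroDivisors A) {x : A}
    (hx : IsIntegralOverIdeal (J.map (algebraMap A B)) (algebraMap A B x)) :
    IsIntegralOverIdeal J x := by
  obtain ⟨n, hn, hxn⟩ := hx.pow_mem_mul_sup_pow
  have hxn' : x ^ n ∈ J * (J ⊔ span {x}) ^ (n - 1) := by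
    rw [← comap_map_eq_self_of_faithfullyFlat (B := B) (J * _), mem_comap, map_pow,
      Ideal.map_mul, Ideal.map_pow, Ideal.map_sup, map_span, Set.image_singleton]
    exact hxn
  exact IsIntegralOn.isIntegralOverIdeal <|
    isIntegralOn_span_singleton_of_pow_mem hn (IsNoetherian.noetherian _) hJ hxn'

theorem le_of_intCl_map_le_intCl_map [IsNoetherianRing A] [Module.FaithfullyFlat A B]
    {I J : Ideal A} (hJc : intCl J = J) (hJ : ∃ r ∈ J, r ∈ nonZeroDivisors A)
    (h : intCl (I.map (algebraMap A B)) ≤ intCl (J.map (algebraMap A B))) : I ≤ J := by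
  intro x hx
  have hxB := h (le_intCl_s10 _ (mem_map_of_mem _ hx))
  rw [mem_intCl_iff_s10 (exists_mem_map_nonZeroDivisors hJ)] at hxB
  exact hJc ▸ subset_span (hxB.of_map hJ)

end FaithfullyFlat

/-- For a faithfully flat algebra `B` over a Noetherian ring `A`, the map
`I ↦ intCl (IB)` is an injective monoid homomorphism `ic(A) → ic(B)`. -/
theorem ic_embeds_faithfullyFlat {A B : Type*} [CommRing A] [IsNoetherianRing A]
    [CommRing B] [Algebra A B] [Module.FaithfullyFlat A B]
    (I J : Ideal A)
    (hIc : intCl I = I) (hInzd : ∃ r ∈ I, r ∈ nonZeroDivisors A)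
    (hJc : intCl J = J) (hJnzd : ∃ r ∈ J, r ∈ nonZeroDivisors A) :
    intCl (Ideal.map (algebraMap A B) (I * J)) =
        intCl (intCl (Ideal.map (algebraMap A B) I) * intCl (Ideal.map (algebraMap A B) J)) ∧
      (intCl (Ideal.map (algebraMap A B) I) = intCl (Ideal.map (algebraMap A B) J) → I = J) := by
  refine ⟨?_, fun h => le_antisymm (le_of_intCl_map_le_intCl_map hJc hJnzd h.le)
    (le_of_intCl_map_le_intCl_map hIc hInzd h.ge)⟩
  rw [Ideal.map_mul]
  exact (intCl_intCl_mul_intCl (exists_mem_map_nonZeroDivisors hInzd)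
    (exists_mem_map_nonZeroDivisors hJnzd)).symm
end
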